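/- arXiv:1504.05172 — 3 statements merged into one kernel-verified Lean document; each statement's English description precedes it below -/
import Mathlib

section
/- For every nontrivial g ∈ H and every integer n ≥ 1, one has |g^n|_Y ≥ ⌊n/7⌋. -/
open FreeGroup Filter

namespace PurelyLox

abbrev F : Type := FreeGroup (Fin 3)

def a : F := FreeGroup.of 0
def b : F := FreeGroup.of 1
def c : F := FreeGroup.of 2

/-- The subgroup generated by `a` and `b`. -/
def H : Subgroup F := Subgroup.closure {a, b}

/-- `g` is a positive word in the generators `a` and `b`. -/
def PosAB (g : F) : Prop :=
  ∀ x ∈ g.toWord, x.2 = true ∧ x.1 ≠ 2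

/-- A word is 7-aperiodic: it contains no subword `u^7` with `u` nonempty. -/
def Aperiodic7 {β : Type*} (w : List β) : Prop :=
  ¬ ∃ u : List β, u ≠ [] ∧ (List.flatten (List.replicate 7 u)) <:+: w

/-- The data of the fixed sequence `(v n)` of positive 7-aperiodic words in `a,b`,
with pairwise distinct lengths tending to infinity. -/
structure VSeq where
  v : ℕ → F
  pos : ∀ n, PosAB (v n)
  len_ne : ∀ m n, m ≠ n → ((v m).toWord.length ≠ (v n).toWord.length)
  len_tendsto : Tendsto (fun n => (v n).toWord.length) atTop atTop
  aperiodic : ∀ n, Aperiodic7 (v n).toWord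

/-- `w n = v n * c`. -/
def VSeq.w (V : VSeq) (n : ℕ) : F := V.v n * c

/-- `z` is a `W`-word: nontrivial, and its reduced word is a subword of
the reduced word of `(w n)^m` for some `n` and some `m ≠ 0`. -/
def VSeq.IsW (V : VSeq) (z : F) : Prop :=
  z ≠ 1 ∧ ∃ (n : ℕ) (m : ℤ), m ≠ 0 ∧ z.toWord <:+: ((V.w n) ^ m).toWord

/-- `|g|_Y`: the least `k` such that `g` is a product of `k` `W`-words. -/
noncomputable def VSeq.normY (V : VSeq) (g : F) : ℕ :=
  sInf {k | ∃ l : List F, l.length = k ∧ (∀ z ∈ l, V.IsW z) ∧ l.prod = g}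

/-- The vertex distance in the graph `Y`. -/
noncomputable def VSeq.dY (V : VSeq) (x y : F) : ℕ := V.normY (x⁻¹ * y)

/-- The product `u * v` is without cancellation. -/
def NoCancel (u v : F) : Prop := (u * v).toWord = u.toWord ++ v.toWord

/-- `p 0, p 1, …, p k` is a `d_Y`-geodesic from `x` to `y`. -/
def VSeq.IsGeodesic (V : VSeq) (x y : F) (k : ℕ) (p : ℕ → F) : Prop :=
  p 0 = x ∧ p k = y ∧ (∀ i < k, V.dY (p i) (p (i + 1)) = 1) ∧ k = V.dY x y

/-- `g` is cyclically reduced. -/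
def CyclicallyReduced (g : F) : Prop := (g * g).toWord = g.toWord ++ g.toWord

/-- `g` is root-free. -/
def RootFree (g : F) : Prop := ∀ (x : F) (s : ℤ), 2 ≤ |s| → g ≠ x ^ s

end PurelyLox

/-!
Write `g = X U X⁻¹` with `U` cyclically reduced, so that the reduced word of `g ^ n` contains
`U ^ n`. If `g ^ n` is a product of `k` W-words, then, since cancellation between consecutive
factors only deletes letters, `U ^ n` is a concatenation of `k` pieces, each a common subword of
`U ^ n` and of one of the W-words. A piece contains no `c` because `g ∈ H`, so it is a subword of
some `v_m` or `v_m⁻¹` and is therefore 7-aperiodic; since a subword of `U ^ n` of length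
`≥ 7 |U|` contains the 7th power of a cyclic conjugate of `U`, every piece is shorter than
`7 |U|`. Hence `n |U| ≤ 7 k |U|`.
-/

namespace List
variable {β : Type*}

theorem exists_eq_append_of_infix_append {l xs ys : List β} (h : l <:+: xs ++ ys) :
    ∃ l₁ l₂, l = l₁ ++ l₂ ∧ l₁ <:+: xs ∧ l₂ <:+: ys := by
  rcases infix_append_iff.mp h with h | h | ⟨l₁, l₂, rfl, h₁, h₂⟩
  · exact ⟨l, [], (append_nil l).symm, h, nil_infix⟩
  · exact ⟨[], l, rfl, nil_infix, h⟩
  · exact ⟨l₁, l₂, rfl, h₁.isInfix, h₂.isInfix⟩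

theorem infix_or_infix_of_infix_append_cons {l xs ys : List β} {e : β}
    (h : l <:+: xs ++ e :: ys) (he : e ∉ l) : l <:+: xs ∨ l <:+: ys := by
  rcases infix_append_iff.mp h with h | h | ⟨l₁, l₂, rfl, h₁, h₂⟩
  · exact .inl h
  · rcases infix_cons_iff.mp h with ⟨t, ht⟩ | h
    · cases l with
      | nil => exact .inl nil_infix
      | cons x l => exact absurd (by simp_all) he
    · exact .inr h
  · cases l₂ with
    | nil => exact .inl (by simpa using h₁.isInfix)
    | cons x l₂ => exact absurd (by simp_all) he

theorem infix_of_infix_flatten_replicate_append_singleton {l xs : List β} {e : β} {n : ℕ}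
    (h : l <:+: (replicate n (xs ++ [e])).flatten) (he : e ∉ l) : l <:+: xs := by
  induction n with
  | zero => simp_all
  | succ n ih =>
    rw [replicate_succ, flatten_cons, append_assoc, singleton_append] at h
    exact (infix_or_infix_of_infix_append_cons h he).elim id ih

theorem flatten_replicate_append_comm (n : ℕ) (s u : List β) :
    (replicate n (s ++ u)).flatten ++ s = s ++ (replicate n (u ++ s)).flatten := by
  induction n with
  | zero => simp
  | succ n ih => simp [replicate_succ, ih]

theorem exists_prefix_flatten_replicate_of_infix {r U : List β} {n : ℕ}
    (h : r <:+: (replicate n U).flatten) :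
    ∃ V : List β, V.length = U.length ∧ r <+: (replicate n V).flatten := by
  obtain ⟨s, t, hst⟩ := h
  induction n generalizing s with
  | zero => exact ⟨U, rfl, by simp_all⟩
  | succ n ih =>
    rw [replicate_succ, flatten_cons, append_assoc] at hst
    by_cases hs : U.length ≤ s.length
    · obtain ⟨s', rfl⟩ : U <+: s :=
        prefix_of_prefix_length_le ⟨_, hst.symm⟩ (prefix_append _ _) hs
      rw [append_assoc, append_cancel_left_eq, ← append_assoc] at hst
      obtain ⟨V, hV, hr⟩ := ih s' hst
      exact ⟨V, hV, hr.trans (by rw [replicate_succ']; simp)⟩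
    · -- `r` is then a prefix of a power of the cyclic conjugate `u ++ s` of `U = s ++ u`
      obtain ⟨u, rfl⟩ : s <+: U :=
        prefix_of_prefix_length_le (prefix_append _ _) ⟨_, hst.symm⟩ (by omega)
      refine ⟨u ++ s, by simp [Nat.add_comm], t ++ s, ?_⟩
      rw [← append_cancel_left_eq s, ← flatten_replicate_append_comm, replicate_succ,
        flatten_cons, ← hst]
      simp

theorem flatten_replicate_prefix_flatten_replicate {k n : ℕ} (h : k ≤ n) (V : List β) :
    (replicate k V).flatten <+: (replicate n V).flatten := by
  obtain ⟨d, rfl⟩ := Nat.exists_eq_add_of_le h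
  rw [replicate_add, flatten_append]
  exact prefix_append _ _

theorem exists_flatten_replicate_prefix_of_infix {r U : List β} {n k : ℕ}
    (h : r <:+: (replicate n U).flatten) (hk : k * U.length ≤ r.length) :
    ∃ V : List β, V.length = U.length ∧ (replicate k V).flatten <+: r := by
  obtain ⟨V, hV, hr⟩ := exists_prefix_flatten_replicate_of_infix h
  refine ⟨V, hV, prefix_of_prefix_length_le ?_ hr (by simp [hV, hk])⟩
  rcases eq_or_ne V [] with rfl | hV₀
  · simp
  · have : k * V.length ≤ n * V.length := by
      have := hr.length_le
      simp only [length_flatten, map_replicate, sum_replicate, smul_eq_mul, hV] at this ⊢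
      omega
    exact flatten_replicate_prefix_flatten_replicate
      (Nat.le_of_mul_le_mul_right this (length_pos_iff.mpr hV₀)) V

end List

open List

namespace FreeGroup
variable {α : Type*}

theorem _root_.List.IsInfix.invRev {L M : List (α × Bool)} (h : L <:+: M) :
    invRev L <:+: invRev M :=
  (h.map _).reverse

theorem invRev_flatten_replicate (n : ℕ) (L : List (α × Bool)) :
    invRev (replicate n L).flatten = (replicate n (invRev L)).flatten := by
  induction n with
  | zero => simp
  | succ n ih =>
    rw [replicate_succ, flatten_cons, invRev_append, ih, replicate_succ', flatten_concat]

theorem isReduced_of_forall_snd_eq {L : List (α × Bool)} {b : Bool} (h : ∀ x ∈ L, x.2 = b) :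
    IsReduced L := by
  unfold IsReduced
  exact (pairwise_of_forall_mem_list (r := fun x y => x.1 = y.1 → x.2 = y.2)
    fun x hx y hy _ => (h x hx).trans (h y hy).symm).isChain

variable [DecidableEq α]

theorem mem_toWord_of_mem_closure {s : Set α} {g : FreeGroup α}
    (hg : g ∈ Subgroup.closure (of '' s)) : ∀ x ∈ g.toWord, x.1 ∈ s := by
  induction hg using Subgroup.closure_induction with
  | mem _ hx =>
    obtain ⟨i, hi, rfl⟩ := hx
    simpa [toWord_of] using hi
  | one => simp
  | mul x y _ _ hx hy =>
    intro z hz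
    exact (mem_append.mp ((toWord_mul_sublist x y).subset hz)).elim (hx z) (hy z)
  | inv x _ hx =>
    intro z hz
    rw [toWord_inv, invRev, mem_reverse, List.mem_map] at hz
    obtain ⟨y, hy, rfl⟩ := hz
    exact hx y hy

theorem IsReduced.exists_reduce_append_eq {L M : List (α × Bool)} (hL : IsReduced L)
    (hM : IsReduced M) : ∃ P S, P <+: L ∧ S <:+ M ∧ reduce (L ++ M) = P ++ S := by
  induction L using List.reverseRecOn generalizing M with
  | nil => exact ⟨[], M, nil_prefix, suffix_refl M, hM.reduce_eq⟩
  | append_singleton L x ih =>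
    cases M with
    | nil => exact ⟨L ++ [x], [], prefix_refl _, suffix_refl _, by simpa using hL.reduce_eq⟩
    | cons y M =>
      by_cases hxy : x.1 = y.1 → x.2 = y.2
      · refine ⟨L ++ [x], y :: M, prefix_refl _, suffix_refl _, IsReduced.reduce_eq ?_⟩
        exact hL.append_overlap (isReduced_cons_cons.mpr ⟨hxy, hM⟩) (cons_ne_nil _ _)
      · obtain ⟨x₁, x₂⟩ := x
        obtain ⟨y₁, y₂⟩ := y
        obtain ⟨rfl, hne⟩ : x₁ = y₁ ∧ y₂ ≠ x₂ := by grind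
        obtain rfl := Bool.eq_not_of_ne hne
        have hcancel : reduce (L ++ [(x₁, x₂)] ++ (x₁, !x₂) :: M) = reduce (L ++ M) :=
          reduce.Step.eq (by simp)
        obtain ⟨P, S, hP, hS, h⟩ := ih (hL.infix (prefix_append _ _).isInfix)
          (hM.infix (suffix_cons _ _).isInfix)
        exact ⟨P, S, hP.trans (prefix_append _ _), hS.trans (suffix_cons _ _), hcancel.trans h⟩

theorem exists_toWord_mul_eq (x y : FreeGroup α) :
    ∃ P S, P <+: x.toWord ∧ S <:+ y.toWord ∧ (x * y).toWord = P ++ S :=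
  toWord_mul x y ▸ isReduced_toWord.exists_reduce_append_eq isReduced_toWord

theorem length_le_of_infix_toWord_prod {Q : List (α × Bool)} {N : ℕ} (l : List (FreeGroup α))
    (hQ : Q <:+: l.prod.toWord)
    (h : ∀ z ∈ l, ∀ r, r <:+: z.toWord → r <:+: Q → r.length ≤ N) :
    Q.length ≤ l.length * N := by
  induction l generalizing Q with
  | nil => simp_all
  | cons z l ih =>
    obtain ⟨P, S, hP, hS, hzl⟩ := exists_toWord_mul_eq z l.prod
    rw [prod_cons, hzl] at hQ
    obtain ⟨Q₁, Q₂, rfl, hQ₁, hQ₂⟩ := exists_eq_append_of_infix_append hQ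
    have h₁ : Q₁.length ≤ N :=
      h z mem_cons_self Q₁ (hQ₁.trans hP.isInfix) infix_append_left
    have h₂ : Q₂.length ≤ l.length * N := ih (hQ₂.trans hS.isInfix)
      fun z hz r hr hrQ => h z (mem_cons_of_mem _ hz) r hr (hrQ.trans infix_append_right)
    rw [length_append, length_cons, Nat.succ_mul]
    omega

theorem flatten_replicate_reduceCyclically_infix_toWord_pow (x : FreeGroup α) (n : ℕ) :
    (replicate n (reduceCyclically x.toWord)).flatten <:+: (x ^ n).toWord := by
  rw [toWord_pow, reduceCyclically.reduce_flatten_replicate isReduced_toWord]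
  split_ifs with hn
  · simp [hn]
  · exact infix_append _ _ _

theorem reduceCyclically_toWord_ne_nil {x : FreeGroup α} (hx : x ≠ 1) :
    reduceCyclically x.toWord ≠ [] := by
  intro h
  have hx' := reduceCyclically.conj_conjugator_reduceCyclically x.toWord
  rw [h, append_nil] at hx'
  rw [← mk_toWord (x := x), ← hx', ← mul_mk, ← inv_mk, mul_inv_cancel] at hx
  exact hx rfl

end FreeGroup

namespace PurelyLox

theorem Aperiodic7.infix {β : Type*} {L M : List β} (h : Aperiodic7 L) (hML : M <:+: L) :
    Aperiodic7 M :=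
  fun ⟨u, hu, hu7⟩ => h ⟨u, hu, hu7.trans hML⟩

theorem Aperiodic7.invRev {α : Type*} {L : List (α × Bool)} (h : Aperiodic7 L) :
    Aperiodic7 (invRev L) := by
  rintro ⟨u, hu, hu7⟩
  refine h ⟨FreeGroup.invRev u, by simpa [FreeGroup.invRev] using hu, ?_⟩
  simpa [invRev_flatten_replicate, invRev_invRev] using hu7.invRev

theorem Aperiodic7.length_lt_of_infix_flatten_replicate {β : Type*} {r U : List β} {n : ℕ}
    (h : Aperiodic7 r) (hU : U ≠ []) (hr : r <:+: (replicate n U).flatten) :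
    r.length < 7 * U.length := by
  by_contra! hlen
  obtain ⟨V, hV, hV7⟩ := exists_flatten_replicate_prefix_of_infix hr hlen
  exact h ⟨V, by rintro rfl; exact hU (length_eq_zero_iff.mp hV.symm), hV7.isInfix⟩

theorem fst_ne_two_of_mem_H {g : F} (hg : g ∈ H) : ∀ x ∈ g.toWord, x.1 ≠ 2 := by
  have hH : H = Subgroup.closure (of '' {0, 1}) := by simp [H, a, b, Set.image_pair]
  intro x hx
  obtain h | h : x.1 = 0 ∨ x.1 = 1 := mem_toWord_of_mem_closure (hH ▸ hg) x hx
  all_goals rw [h]; decide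

namespace VSeq

variable (V : VSeq)

theorem toWord_w_pow (n k : ℕ) :
    ((V.w n) ^ k).toWord = (replicate k ((V.v n).toWord ++ [(2, true)])).flatten := by
  have hw : V.w n = FreeGroup.mk ((V.v n).toWord ++ [(2, true)]) := by
    rw [VSeq.w, c, ← mul_mk, mk_toWord]
    rfl
  rw [hw, pow_mk, toWord_mk, IsReduced.reduce_eq]
  refine isReduced_of_forall_snd_eq (b := true) fun x hx => ?_
  rcases (by simpa using hx : k ≠ 0 ∧ (x ∈ (V.v n).toWord ∨ x = (2, true))).2 with hx | rfl
  · exact (V.pos n x hx).1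
  · rfl

theorem aperiodic_of_infix_toWord_w_pow {r : List (Fin 3 × Bool)} {n k : ℕ}
    (hr : r <:+: ((V.w n) ^ k).toWord) (hc : (2, true) ∉ r) : Aperiodic7 r :=
  (V.aperiodic n).infix
    (infix_of_infix_flatten_replicate_append_singleton (V.toWord_w_pow n k ▸ hr) hc)

variable {V}

theorem IsW.aperiodic_of_infix {z : F} {r : List (Fin 3 × Bool)} (hz : V.IsW z)
    (hr : r <:+: z.toWord) (hc : ∀ x ∈ r, x.1 ≠ 2) : Aperiodic7 r := by
  obtain ⟨-, n, m, -, hzm⟩ := hz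
  obtain ⟨k, rfl | rfl⟩ := Int.eq_nat_or_neg m
  · exact V.aperiodic_of_infix_toWord_w_pow (hr.trans hzm) fun h => hc _ h rfl
  · rw [zpow_neg, zpow_natCast, toWord_inv] at hzm
    have hr' : invRev r <:+: ((V.w n) ^ k).toWord := by
      simpa [invRev_invRev] using (hr.trans hzm).invRev
    have hc' : (2, true) ∉ invRev r := fun h => by
      simp only [invRev, mem_reverse, List.mem_map] at h
      obtain ⟨x, hx, hx2⟩ := h
      exact hc x hx (congrArg Prod.fst hx2)
    simpa [invRev_invRev] using (V.aperiodic_of_infix_toWord_w_pow hr' hc').invRev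

theorem IsW.inv {z : F} (hz : V.IsW z) : V.IsW z⁻¹ := by
  obtain ⟨hz1, n, m, hm, hzm⟩ := hz
  refine ⟨inv_ne_one.mpr hz1, n, -m, neg_ne_zero.mpr hm, ?_⟩
  rw [zpow_neg, toWord_inv, toWord_inv]
  exact hzm.invRev

variable (V)

theorem isW_of {i : Fin 3} {n : ℕ} (hi : (i, true) ∈ (V.v n).toWord) : V.IsW (of i) := by
  refine ⟨of_ne_one i, n, 1, one_ne_zero, ?_⟩
  rw [zpow_one, toWord_of, singleton_infix_iff, ← pow_one (V.w n), toWord_w_pow]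
  simp [hi]

theorem exists_mem_toWord_v {i : Fin 3} (hi : i ≠ 2) : ∃ n, (i, true) ∈ (V.v n).toWord := by
  obtain ⟨n, hn⟩ := (V.len_tendsto.eventually_ge_atTop 7).exists
  refine ⟨n, by_contra fun hin => V.aperiodic n ⟨[(1 - i, true)], cons_ne_nil _ _, ?_⟩⟩
  -- otherwise `v n` is a power of the other generator `1 - i`
  have hrep : (V.v n).toWord = replicate (V.v n).toWord.length (1 - i, true) := by
    refine eq_replicate_of_mem fun x hx => ?_
    obtain ⟨hx2, hxc⟩ := V.pos n x hx
    have hxi : x.1 ≠ i := fun h => hin (by rwa [← h, ← hx2])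
    have hother : ∀ i j : Fin 3, i ≠ 2 → j ≠ 2 → j ≠ i → j = 1 - i := by decide
    exact Prod.ext (hother i x.1 hi hxc hxi) hx2
  rw [hrep, flatten_replicate_singleton, infix_replicate_iff]
  simpa using hn

theorem H_le_closure_isW : H ≤ Subgroup.closure {z | V.IsW z} := by
  rw [H, Subgroup.closure_le]
  rintro _ (rfl | rfl)
  · obtain ⟨n, hn⟩ := V.exists_mem_toWord_v (i := 0) (by decide)
    exact Subgroup.subset_closure (V.isW_of hn)
  · obtain ⟨n, hn⟩ := V.exists_mem_toWord_v (i := 1) (by decide)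
    exact Subgroup.subset_closure (V.isW_of hn)

theorem exists_list_length_eq_normY {g : F} (hg : g ∈ Subgroup.closure {z | V.IsW z}) :
    ∃ l : List F, l.length = V.normY g ∧ (∀ z ∈ l, V.IsW z) ∧ l.prod = g := by
  refine Nat.sInf_mem
    (s := {k | ∃ l : List F, l.length = k ∧ (∀ z ∈ l, V.IsW z) ∧ l.prod = g}) ?_
  rw [← Subgroup.mem_toSubmonoid, Subgroup.closure_toSubmonoid] at hg
  obtain ⟨l, hl, rfl⟩ := Submonoid.exists_list_of_mem_closure hg
  refine ⟨l.length, l, rfl, fun z hz => ?_, rfl⟩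
  exact (hl z hz).elim id fun h => inv_inv z ▸ IsW.inv h

theorem le_mul_length_of_prod_eq_pow {g : F} (hgH : g ∈ H) (hg : g ≠ 1) (n : ℕ) {l : List F}
    (hl : ∀ z ∈ l, V.IsW z) (hprod : l.prod = g ^ n) : n ≤ 7 * l.length := by
  set U := reduceCyclically g.toWord
  have hU : U ≠ [] := reduceCyclically_toWord_ne_nil hg
  have hUn : (replicate n U).flatten <:+: (g ^ n).toWord :=
    flatten_replicate_reduceCyclically_infix_toWord_pow g n
  have hpieces : ∀ z ∈ l, ∀ r, r <:+: z.toWord → r <:+: (replicate n U).flatten →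
      r.length ≤ 7 * U.length := by
    intro z hz r hrz hrU
    have hc : ∀ x ∈ r, x.1 ≠ 2 := fun x hx =>
      fst_ne_two_of_mem_H (pow_mem hgH n) x ((hrU.trans hUn).subset hx)
    exact ((hl z hz).aperiodic_of_infix hrz hc
      |>.length_lt_of_infix_flatten_replicate hU hrU).le
  have hlen := length_le_of_infix_toWord_prod l (hprod ▸ hUn) hpieces
  simp only [length_flatten, map_replicate, sum_replicate, smul_eq_mul, ← mul_assoc] at hlen
  exact Nat.le_of_mul_le_mul_right (by linarith) (length_pos_iff.mpr hU)

end VSeq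

/-- For every nontrivial `g ∈ H` and every `n ≥ 1`, `|g^n|_Y ≥ ⌊n/7⌋`. -/
theorem stmt12 (V : VSeq) :
    ∀ g : F, g ∈ H → g ≠ 1 → ∀ n : ℕ, 1 ≤ n → n / 7 ≤ V.normY (g ^ n) := by
  intro g hgH hg n _
  obtain ⟨l, hlen, hl, hprod⟩ :=
    V.exists_list_length_eq_normY (V.H_le_closure_isW (pow_mem hgH n))
  have := V.le_mul_length_of_prod_eq_pow hgH hg n hl hprod
  omega

end PurelyLox
end

section
/- Let w ∈ F be nontrivial and cyclically reduced, let u ∈ F, and let n ≥ 1 be such that the product g := u·w^n·u⁻¹ is without cancellation. Suppose g = z_1⋯z_k without cancellation, where each z_i is nontrivial and the reduced word of each z_i is 7-aperiodic (contains no subword of the form u₀^7 with u₀ a nonempty word). Then k ≥ ⌊n/7⌋. -/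
/-!
Inside the reduced word of `u * w ^ n * u⁻¹` sits the literal power `W ^ n` of the word `W` of `w`,
which has period `|W|`. Every piece of it lying in one factor `z_i` is again `|W|`-periodic, and a
`|W|`-periodic word of length at least `7 |W|` begins with the seventh power of its first `|W|`
letters. So each of the `k` factors covers fewer than `7 |W|` letters of `W ^ n`, whence
`n |W| ≤ 7 |W| k`.
-/

namespace PurelyLoxGen

/-- A word is 7-aperiodic: it contains no subword `u₀^7` with `u₀` nonempty. -/
def Aperiodic7 {β : Type*} (w : List β) : Prop :=
  ¬ ∃ u₀ : List β, u₀ ≠ [] ∧ (List.flatten (List.replicate 7 u₀)) <:+: w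

/-- An element of a free group is cyclically reduced. -/
def CyclicallyReduced {α : Type*} [DecidableEq α] (g : FreeGroup α) : Prop :=
  (g * g).toWord = g.toWord ++ g.toWord

section Periodic

variable {β : Type*}

/-- `X` has period `m`: `X[i] = X[i + m]` whenever both sides are defined. -/
def HasPeriod (m : ℕ) (X : List β) : Prop :=
  X.drop m <+: X

theorem exists_append_of_isInfix_append {X A B : List β} (h : X <:+: A ++ B) :
    ∃ X₁ X₂, X = X₁ ++ X₂ ∧ X₁ <:+: A ∧ X₂ <:+: B := by
  rcases List.infix_append_iff.mp h with hA | hB | ⟨X₁, X₂, hX, hX₁, hX₂⟩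
  · exact ⟨X, [], by simp, hA, List.nil_infix⟩
  · exact ⟨[], X, by simp, List.nil_infix, hB⟩
  · exact ⟨X₁, X₂, hX, hX₁.isInfix, hX₂.isInfix⟩

namespace HasPeriod

variable {m : ℕ} {X : List β}

theorem take (h : HasPeriod m X) (l : ℕ) : HasPeriod m (X.take l) := by
  rw [HasPeriod, List.drop_take]
  exact (List.IsPrefix.take h (l - m)).trans (List.take_prefix_take_left (by omega))

theorem drop (h : HasPeriod m X) (l : ℕ) : HasPeriod m (X.drop l) := by
  rw [HasPeriod, List.drop_drop, Nat.add_comm, ← List.drop_drop]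
  exact List.IsPrefix.drop h l

theorem of_prefix {Y : List β} (h : HasPeriod m X) (hY : Y <+: X) : HasPeriod m Y := by
  rw [List.prefix_iff_eq_take.mp hY]
  exact h.take _

theorem of_suffix {Y : List β} (h : HasPeriod m X) (hY : Y <:+ X) : HasPeriod m Y := by
  rw [List.suffix_iff_eq_drop.mp hY]
  exact h.drop _

theorem flatten_replicate (W : List β) (n : ℕ) :
    HasPeriod W.length (List.replicate n W).flatten := by
  cases n with
  | zero => simp [HasPeriod]
  | succ n =>
    rw [HasPeriod, List.replicate_succ, List.flatten_cons, List.drop_left,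
      ← List.flatten_cons, ← List.replicate_succ, List.replicate_succ', List.flatten_append]
    exact List.prefix_append _ _

theorem replicate_take_prefix (h : HasPeriod m X) {j : ℕ} (hj : j * m ≤ X.length) :
    (List.replicate j (X.take m)).flatten <+: X := by
  induction j generalizing X with
  | zero => simp
  | succ j ih =>
    rw [Nat.succ_mul] at hj
    rcases Nat.eq_zero_or_pos j with rfl | hj₀
    · simpa using List.take_prefix m X
    have hmj := Nat.le_mul_of_pos_left m hj₀
    have htake : (X.drop m).take m = X.take m :=
      (List.IsPrefix.take h m).eq_of_length <| by
        simp only [List.length_take, List.length_drop]; omega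
    have hrest := ih (h.drop m) (by rw [List.length_drop]; omega)
    rw [htake] at hrest
    rw [List.replicate_succ, List.flatten_cons]
    conv_rhs => rw [← List.take_append_drop m X]
    exact (List.prefix_append_right_inj _).mpr hrest

theorem length_lt_of_isInfix_aperiodic7 {Z : List β} (hm : 0 < m)
    (hX : HasPeriod m X) (hZ : Aperiodic7 Z) (hXZ : X <:+: Z) : X.length < 7 * m := by
  by_contra! hlong
  refine hZ ⟨X.take m, ?_, ((hX.replicate_take_prefix (j := 7) (by omega)).isInfix).trans hXZ⟩
  rw [← List.length_pos_iff, List.length_take]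
  omega

theorem length_le_of_isInfix_flatten (hm : 0 < m)
    (hX : HasPeriod m X) {zs : List (List β)} (hzs : ∀ z ∈ zs, Aperiodic7 z)
    (hXzs : X <:+: zs.flatten) : X.length ≤ 7 * m * zs.length := by
  induction zs generalizing X with
  | nil => simp_all
  | cons z zs ih =>
    rw [List.flatten_cons] at hXzs
    obtain ⟨X₁, X₂, rfl, hX₁, hX₂⟩ := exists_append_of_isInfix_append hXzs
    have h₁ := (hX.of_prefix (List.prefix_append X₁ X₂)).length_lt_of_isInfix_aperiodic7 hm
      (hzs z List.mem_cons_self) hX₁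
    have h₂ := ih (hX.of_suffix (List.suffix_append X₁ X₂))
      (fun z' hz' => hzs z' (List.mem_cons_of_mem z hz')) hX₂
    rw [List.length_append, List.length_cons]
    nlinarith

end HasPeriod

end Periodic

section FreeGroup

variable {α : Type*}

theorem isCyclicallyReduced_of_isReduced_append_self {L : List (α × Bool)}
    (h : FreeGroup.IsReduced (L ++ L)) : FreeGroup.IsCyclicallyReduced L :=
  ⟨h.infix (List.infix_append_left), (List.isChain_append.mp h).2.2⟩

variable [DecidableEq α]

theorem CyclicallyReduced.isCyclicallyReduced_toWord {w : FreeGroup α}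
    (h : CyclicallyReduced w) : FreeGroup.IsCyclicallyReduced w.toWord := by
  apply isCyclicallyReduced_of_isReduced_append_self
  rw [← h]
  exact FreeGroup.isReduced_toWord

theorem toWord_pow_of_isCyclicallyReduced {w : FreeGroup α}
    (h : FreeGroup.IsCyclicallyReduced w.toWord) (n : ℕ) :
    (w ^ n).toWord = (List.replicate n w.toWord).flatten := by
  rw [FreeGroup.toWord_pow]
  exact (h.flatten_replicate n).isReduced.reduce_eq

end FreeGroup

theorem stmt17_general {α : Type*} [DecidableEq α] (w u : FreeGroup α) (n : ℕ)
    (hw : w ≠ 1) (hwc : CyclicallyReduced w)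
    (hg : (u * w ^ n * u⁻¹).toWord = u.toWord ++ (w ^ n).toWord ++ u⁻¹.toWord)
    (k : ℕ) (z : Fin k → FreeGroup α)
    (hzap : ∀ i, Aperiodic7 (z i).toWord)
    (hnc : (u * w ^ n * u⁻¹).toWord = (List.ofFn fun i => (z i).toWord).flatten) :
    n / 7 ≤ k := by
  have hm : 0 < w.toWord.length :=
    List.length_pos_iff.mpr fun h => hw (FreeGroup.toWord_eq_nil_iff.mp h)
  have hpow := toWord_pow_of_isCyclicallyReduced hwc.isCyclicallyReduced_toWord n
  have hinfix : (w ^ n).toWord <:+: (List.ofFn fun i => (z i).toWord).flatten := by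
    rw [← hnc, hg]
    exact List.infix_append _ _ _
  have hperiod : HasPeriod w.toWord.length (w ^ n).toWord :=
    hpow ▸ HasPeriod.flatten_replicate w.toWord n
  have hbound := hperiod.length_le_of_isInfix_flatten hm
    (by simpa [List.mem_ofFn] using hzap) hinfix
  have hlength : (w ^ n).toWord.length = n * w.toWord.length := by simp [hpow]
  rw [hlength, List.length_ofFn] at hbound
  exact Nat.div_le_of_le_mul (Nat.le_of_mul_le_mul_right (by linarith) hm)

/-- If `g = u * w^n * u⁻¹` without cancellation with `w` nontrivial and
cyclically reduced, and `g = z_1 ⋯ z_k` without cancellation with each `z_i` nontrivial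
and 7-aperiodic, then `k ≥ ⌊n/7⌋`. -/
theorem stmt17 {α : Type*} [DecidableEq α] (w u : FreeGroup α) (n : ℕ)
    (hw : w ≠ 1) (hwc : CyclicallyReduced w) (hn : 1 ≤ n)
    (hg : (u * w ^ n * u⁻¹).toWord = u.toWord ++ (w ^ n).toWord ++ u⁻¹.toWord)
    (k : ℕ) (z : Fin k → FreeGroup α)
    (hz1 : ∀ i, z i ≠ 1)
    (hzap : ∀ i, Aperiodic7 (z i).toWord)
    (hprod : (List.ofFn z).prod = u * w ^ n * u⁻¹)
    (hnc : (u * w ^ n * u⁻¹).toWord = (List.ofFn fun i => (z i).toWord).flatten) :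
    n / 7 ≤ k :=
  stmt17_general w u n hw hwc hg k z hzap hnc

end PurelyLoxGen
end

section
/- Let u₁, u₂ ∈ F be nontrivial cyclically reduced elements and suppose that for some integers k, t ≥ 1 the reduced words of u₁^k and u₂^t have a common initial segment of length at least |u₁| + |u₂|, where |·| denotes reduced word length. Then there exists a unique root-free cyclically reduced element u₀ ∈ F (root-free meaning u₀ is not equal to x^s for any x ∈ F and any integer s with |s| ≥ 2) such that u₁ = u₀^r and u₂ = u₀^s for some integers r, s ≥ 1. -/
/-!
Along the common prefix `p`, the powers of `u₁` and `u₂` give `p` the periods `|u₁|` and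
`|u₂|`. As `|p| ≥ |u₁| + |u₂|`, the Fine–Wilf periodicity lemma gives `p` the period
`gcd |u₁| |u₂|`, so both words are powers of the prefix of `p` of that length, and hence of a
primitive word `c`. Then `u₀ = c` is cyclically reduced because `u₁` is, and root-free because
the reduced word of a cyclically reduced power `x ^ n` is the `n`-th power of the cyclic
reduction of `x`. Uniqueness: the words of two root-free cyclically reduced elements with a
common positive power are powers of a common word, hence equal.
-/

namespace PurelyLoxGen

/-- An element of a free group is root-free: it is not a proper power. -/
def RootFree {α : Type*} [DecidableEq α] (g : FreeGroup α) : Prop :=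
  ∀ (x : FreeGroup α) (s : ℤ), 2 ≤ |s| → g ≠ x ^ s

end PurelyLoxGen

namespace List

variable {β : Type*}

theorem flatten_replicate_flatten_replicate (l : List β) (m n : ℕ) :
    (replicate n (replicate m l).flatten).flatten = (replicate (m * n) l).flatten := by
  induction n with
  | zero => simp
  | succ n ih =>
    rw [replicate_succ', flatten_concat, ih, Nat.mul_succ, replicate_add, flatten_append]

theorem flatten_replicate_ne_nil_iff {l : List β} {n : ℕ} :
    (replicate n l).flatten ≠ [] ↔ n ≠ 0 ∧ l ≠ [] := by
  simp

theorem take_length_flatten_replicate (l : List β) {n : ℕ} (hn : n ≠ 0) :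
    take l.length (replicate n l).flatten = l := by
  obtain ⟨n, rfl⟩ := Nat.exists_eq_succ_of_ne_zero hn
  simp [replicate_succ]

theorem hasPeriod_flatten_replicate (l : List β) (n : ℕ) :
    HasPeriod (replicate n l).flatten l.length := by
  rcases eq_or_ne n 0 with rfl | hn
  · simp
  rw [HasPeriod, take_length_flatten_replicate l hn, ← flatten_cons, ← replicate_succ,
    replicate_succ', flatten_concat]
  exact prefix_append _ _

theorem prefix_of_prefix_flatten_replicate {l p : List β} {n : ℕ}
    (hp : p <+: (replicate n l).flatten) (hlen : l.length ≤ p.length) : l <+: p := by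
  rcases eq_or_ne n 0 with rfl | hn
  · simp_all
  rw [prefix_iff_eq_take]
  conv_lhs => rw [← take_length_flatten_replicate l hn]
  exact ((hp.take l.length).eq_of_length
    (by simp [hlen, Nat.le_mul_of_pos_left _ (Nat.pos_of_ne_zero hn)])).symm

theorem HasPeriod.eq_of_take_eq {v w : List β} {p : ℕ} (hp : 0 < p) (hv : HasPeriod v p)
    (hw : HasPeriod w p) (hlen : v.length = w.length) (htake : take p v = take p w) : v = w := by
  refine ext_getElem? fun i => ?_
  rcases lt_or_ge i v.length with hi | hi
  · rw [hasPeriod_iff_forall_getElem?_mod.1 hv i hi,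
      hasPeriod_iff_forall_getElem?_mod.1 hw i (hlen ▸ hi),
      ← getElem?_take_of_lt (Nat.mod_lt i hp), htake, getElem?_take_of_lt (Nat.mod_lt i hp)]
  · rw [getElem?_eq_none hi, getElem?_eq_none (hlen ▸ hi)]

theorem HasPeriod.eq_flatten_replicate_take {w : List β} {p n : ℕ} (hw : HasPeriod w p)
    (hlen : w.length = n * p) : w = (replicate n (take p w)).flatten := by
  rcases Nat.eq_zero_or_pos p with rfl | hp
  · simp_all
  rcases eq_or_ne n 0 with rfl | hn
  · simp_all
  have htake : (take p w).length = p :=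
    length_take_of_le (hlen ▸ Nat.le_mul_of_pos_left _ (Nat.pos_of_ne_zero hn))
  have hper := hasPeriod_flatten_replicate (take p w) n
  rw [htake] at hper
  refine hw.eq_of_take_eq hp hper (by simp [hlen, htake]) ?_
  have hfirst := take_length_flatten_replicate (take p w) hn
  rw [htake] at hfirst
  rw [hfirst]

theorem exists_flatten_replicate_of_prefix_of_prefix {w₁ w₂ p : List β} {k t : ℕ}
    (h₁ : w₁ ≠ []) (h₂ : w₂ ≠ [])
    (hp₁ : p <+: (replicate k w₁).flatten) (hp₂ : p <+: (replicate t w₂).flatten)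
    (hlen : w₁.length + w₂.length ≤ p.length) :
    ∃ (z : List β) (a b : ℕ),
      w₁ = (replicate a z).flatten ∧ w₂ = (replicate b z).flatten := by
  set g := w₁.length.gcd w₂.length
  have hpg : HasPeriod p g :=
    ((hasPeriod_flatten_replicate w₁ k).infix hp₁.isInfix).gcd
      ((hasPeriod_flatten_replicate w₂ t).infix hp₂.isInfix) (by omega)
  have hw₁ : w₁ <+: p := prefix_of_prefix_flatten_replicate hp₁ (by omega)
  have hw₂ : w₂ <+: p := prefix_of_prefix_flatten_replicate hp₂ (by omega)
  have hg₁ : g ≤ w₁.length := Nat.gcd_le_left _ (length_pos_iff.2 h₁)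
  have hg₂ : g ≤ w₂.length := Nat.gcd_le_right _ (length_pos_iff.2 h₂)
  refine ⟨take g p, w₁.length / g, w₂.length / g, ?_, ?_⟩
  · rw [← (hw₁.take g).eq_of_length (by simp; omega)]
    exact (hpg.infix hw₁.isInfix).eq_flatten_replicate_take
      (Nat.div_mul_cancel (Nat.gcd_dvd_left _ _)).symm
  · rw [← (hw₂.take g).eq_of_length (by simp; omega)]
    exact (hpg.infix hw₂.isInfix).eq_flatten_replicate_take
      (Nat.div_mul_cancel (Nat.gcd_dvd_right _ _)).symm

theorem exists_flatten_replicate_of_flatten_replicate_eq {x y : List β} {a b : ℕ}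
    (hx : x ≠ []) (hy : y ≠ []) (ha : a ≠ 0) (hb : b ≠ 0)
    (h : (replicate a x).flatten = (replicate b y).flatten) :
    ∃ (z : List β) (i j : ℕ), x = (replicate i z).flatten ∧ y = (replicate j z).flatten := by
  rcases eq_or_ne a 1 with rfl | ha₁
  · exact ⟨y, b, 1, by simpa using h, by simp⟩
  rcases eq_or_ne b 1 with rfl | hb₁
  · exact ⟨x, 1, a, by simp, by simpa using h.symm⟩
  have hlen := congrArg length h
  simp only [length_flatten, map_replicate, sum_replicate, smul_eq_mul] at hlen
  refine exists_flatten_replicate_of_prefix_of_prefix hx hy (prefix_refl _) (by rw [h]) ?_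
  simp only [length_flatten, map_replicate, sum_replicate, smul_eq_mul]
  nlinarith [Nat.two_le_iff a |>.2 ⟨ha, ha₁⟩, Nat.two_le_iff b |>.2 ⟨hb, hb₁⟩]

/-- The empty word is not primitive: it is any word repeated zero times. -/
def IsPrimitive (w : List β) : Prop :=
  ∀ (z : List β) (n : ℕ), (replicate n z).flatten = w → n = 1

theorem exists_isPrimitive_flatten_replicate_eq {w : List β} (hw : w ≠ []) :
    ∃ (c : List β) (e : ℕ), IsPrimitive c ∧ (replicate e c).flatten = w := by
  induction hlen : w.length using Nat.strong_induction_on generalizing w with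
  | _ N ih =>
  by_cases hprim : IsPrimitive w
  · exact ⟨w, 1, hprim, by simp⟩
  obtain ⟨z, n, rfl, hn₁⟩ : ∃ z n, (replicate n z).flatten = w ∧ n ≠ 1 := by
    simpa [IsPrimitive] using hprim
  obtain ⟨hn, hz⟩ := flatten_replicate_ne_nil_iff.1 hw
  have hshorter : z.length < N := by
    rw [← hlen, length_flatten, map_replicate, sum_replicate, smul_eq_mul]
    exact (Nat.lt_mul_iff_one_lt_left (length_pos_iff.2 hz)).2 (by omega)
  obtain ⟨c, e, hc, rfl⟩ := ih z.length hshorter hz rfl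
  exact ⟨c, e * n, hc, (flatten_replicate_flatten_replicate c e n).symm⟩

end List

open List

namespace FreeGroup

variable {α : Type*}

theorem isReduced_append_self_iff {L : List (α × Bool)} :
    IsReduced (L ++ L) ↔ IsCyclicallyReduced L := by
  simp only [IsReduced, isChain_append, IsCyclicallyReduced, and_self_left]

theorem IsCyclicallyReduced.of_flatten_replicate {L : List (α × Bool)} {n : ℕ} (hn : n ≠ 0)
    (h : IsCyclicallyReduced (replicate n L).flatten) : IsCyclicallyReduced L := by
  obtain ⟨m, rfl⟩ := Nat.exists_eq_succ_of_ne_zero hn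
  refine ⟨h.isReduced.infix ⟨[], (replicate m L).flatten, by simp [replicate_succ]⟩,
    fun a ha b hb => ?_⟩
  rw [← getLast?_flatten_replicate hn] at ha
  rw [← head?_flatten_replicate hn] at hb
  exact h.2 a ha b hb

variable [DecidableEq α]

theorem toWord_pow_eq_flatten_replicate_reduceCyclically {x : FreeGroup α} {n : ℕ} (hn : n ≠ 0)
    (h : IsCyclicallyReduced (x ^ n).toWord) :
    (x ^ n).toWord = (replicate n (reduceCyclically x.toWord)).flatten := by
  rw [toWord_pow, reduceCyclically.reduce_flatten_replicate isReduced_toWord, if_neg hn] at h ⊢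
  cases hC : reduceCyclically.conjugator x.toWord with
  | nil => simp [invRev]
  | cons a C =>
    rw [hC] at h
    have := h.2 (a.1, !a.2) (by rw [getLast?_append, invRev, getLast?_reverse]; rfl) a (by simp)
    simp at this

theorem eq_mk_pow_of_toWord_eq {x : FreeGroup α} {L : List (α × Bool)} {n : ℕ}
    (h : x.toWord = (replicate n L).flatten) : x = mk L ^ n := by
  rw [← mk_toWord (x := x), h, pow_mk]

end FreeGroup

namespace PurelyLoxGen

open FreeGroup

section

variable {α : Type*} [DecidableEq α]

theorem cyclicallyReduced_iff {g : FreeGroup α} :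
    CyclicallyReduced g ↔ IsCyclicallyReduced g.toWord := by
  rw [CyclicallyReduced, toWord_mul, ← isReduced_iff_reduce_eq, isReduced_append_self_iff]

theorem cyclicallyReduced_mk {L : List (α × Bool)} (h : IsCyclicallyReduced L) :
    CyclicallyReduced (mk L) := by
  rw [cyclicallyReduced_iff, toWord_mk, h.isReduced.reduce_eq]
  exact h

theorem CyclicallyReduced.toWord_pow {g : FreeGroup α} (hg : CyclicallyReduced g) (n : ℕ) :
    (g ^ n).toWord = (replicate n g.toWord).flatten := by
  rw [FreeGroup.toWord_pow, ((cyclicallyReduced_iff.1 hg).flatten_replicate n).isReduced.reduce_eq]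

theorem rootFree_iff {g : FreeGroup α} :
    RootFree g ↔ ∀ (x : FreeGroup α) (n : ℕ), 2 ≤ n → g ≠ x ^ n := by
  refine ⟨fun h x n hn => by exact_mod_cast h x n (by simp; omega), fun h x s hs => ?_⟩
  rw [Int.abs_eq_natAbs] at hs
  rcases Int.natAbs_eq s with hs' | hs' <;> rw [hs']
  · rw [zpow_natCast]
    exact h x _ (by omega)
  · rw [zpow_neg, ← inv_zpow, zpow_natCast]
    exact h x⁻¹ _ (by omega)

theorem RootFree.ne_one {g : FreeGroup α} (hg : RootFree g) : g ≠ 1 := by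
  rintro rfl
  exact hg 1 2 (by norm_num) (one_zpow 2).symm

theorem RootFree.eq_one_of_eq_pow {g x : FreeGroup α} {n : ℕ} (hg : RootFree g) (h : g = x ^ n) :
    n = 1 := by
  rcases n with _ | _ | n
  · exact absurd (h.trans (pow_zero x)) hg.ne_one
  · rfl
  · exact absurd h (rootFree_iff.1 hg x _ (by omega))

theorem rootFree_mk {c : List (α × Bool)} (hc : IsPrimitive c) (hcr : IsCyclicallyReduced c) :
    RootFree (mk c) := by
  refine rootFree_iff.2 fun x n hn h => ?_
  have hword : (x ^ n).toWord = c := by rw [← h, toWord_mk, hcr.isReduced.reduce_eq]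
  have hpow := toWord_pow_eq_flatten_replicate_reduceCyclically (by omega) (hword ▸ hcr)
  have hn₁ : n = 1 := hc _ n (hpow.symm.trans hword)
  omega

theorem RootFree.eq_of_pow_eq_pow {x y : FreeGroup α} {m n : ℕ} (hx : RootFree x)
    (hy : RootFree y) (hxc : CyclicallyReduced x) (hyc : CyclicallyReduced y) (hm : m ≠ 0)
    (hn : n ≠ 0) (h : x ^ m = y ^ n) : x = y := by
  have hword : (replicate m x.toWord).flatten = (replicate n y.toWord).flatten := by
    rw [← hxc.toWord_pow, ← hyc.toWord_pow, h]
  obtain ⟨z, i, j, hxz, hyz⟩ := exists_flatten_replicate_of_flatten_replicate_eq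
    (mt toWord_eq_nil_iff.1 hx.ne_one) (mt toWord_eq_nil_iff.1 hy.ne_one) hm hn hword
  have hi : i = 1 := hx.eq_one_of_eq_pow (eq_mk_pow_of_toWord_eq hxz)
  have hj : j = 1 := hy.eq_one_of_eq_pow (eq_mk_pow_of_toWord_eq hyz)
  rw [← toWord_inj, hxz, hyz, hi, hj]

end

theorem stmt19_general {α : Type*} [DecidableEq α] (u₁ u₂ : FreeGroup α)
    (h1 : u₁ ≠ 1) (h2 : u₂ ≠ 1)
    (hc1 : CyclicallyReduced u₁) (hc2 : CyclicallyReduced u₂)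
    (k t : ℕ)
    (p : List (α × Bool))
    (hlen : u₁.toWord.length + u₂.toWord.length ≤ p.length)
    (hp1 : p <+: (u₁ ^ k).toWord) (hp2 : p <+: (u₂ ^ t).toWord) :
    ∃! u₀ : FreeGroup α, RootFree u₀ ∧ CyclicallyReduced u₀ ∧
      ∃ r s : ℕ, 1 ≤ r ∧ 1 ≤ s ∧ u₁ = u₀ ^ r ∧ u₂ = u₀ ^ s := by
  have hw₁ : u₁.toWord ≠ [] := mt toWord_eq_nil_iff.1 h1
  have hw₂ : u₂.toWord ≠ [] := mt toWord_eq_nil_iff.1 h2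
  rw [hc1.toWord_pow] at hp1
  rw [hc2.toWord_pow] at hp2
  obtain ⟨z, a, b, hz₁, hz₂⟩ :=
    exists_flatten_replicate_of_prefix_of_prefix hw₁ hw₂ hp1 hp2 hlen
  obtain ⟨c, e, hc, rfl⟩ :=
    exists_isPrimitive_flatten_replicate_eq (flatten_replicate_ne_nil_iff.1 (hz₁ ▸ hw₁)).2
  rw [flatten_replicate_flatten_replicate] at hz₁ hz₂
  have hea : e * a ≠ 0 := (flatten_replicate_ne_nil_iff.1 (hz₁ ▸ hw₁)).1
  have heb : e * b ≠ 0 := (flatten_replicate_ne_nil_iff.1 (hz₂ ▸ hw₂)).1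
  have hcr : IsCyclicallyReduced c := by
    rw [cyclicallyReduced_iff, hz₁] at hc1
    exact hc1.of_flatten_replicate hea
  refine ⟨mk c, ⟨rootFree_mk hc hcr, cyclicallyReduced_mk hcr, e * a, e * b, by omega, by omega,
    eq_mk_pow_of_toWord_eq hz₁, eq_mk_pow_of_toWord_eq hz₂⟩, ?_⟩
  rintro v ⟨hv, hvc, r, -, hr, -, hu₁, -⟩
  exact hv.eq_of_pow_eq_pow (rootFree_mk hc hcr) hvc (cyclicallyReduced_mk hcr) (by omega) hea
    (hu₁ ▸ eq_mk_pow_of_toWord_eq hz₁)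

/-- Lyndon–Schützenberger: if powers of two nontrivial cyclically reduced
elements `u₁, u₂` share an initial segment of length at least `|u₁| + |u₂|`, then `u₁` and
`u₂` are positive powers of a unique common root-free cyclically reduced element `u₀`. -/
theorem stmt19 {α : Type*} [DecidableEq α] (u₁ u₂ : FreeGroup α)
    (h1 : u₁ ≠ 1) (h2 : u₂ ≠ 1)
    (hc1 : CyclicallyReduced u₁) (hc2 : CyclicallyReduced u₂)
    (k t : ℕ) (hk : 1 ≤ k) (ht : 1 ≤ t)
    (p : List (α × Bool))
    (hlen : u₁.toWord.length + u₂.toWord.length ≤ p.length)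
    (hp1 : p <+: (u₁ ^ k).toWord) (hp2 : p <+: (u₂ ^ t).toWord) :
    ∃! u₀ : FreeGroup α, RootFree u₀ ∧ CyclicallyReduced u₀ ∧
      ∃ r s : ℕ, 1 ≤ r ∧ 1 ≤ s ∧ u₁ = u₀ ^ r ∧ u₂ = u₀ ^ s :=
  stmt19_general u₁ u₂ h1 h2 hc1 hc2 k t p hlen hp1 hp2

end PurelyLoxGen
end
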